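/- Let ≺ be a monomial ordering on ℚ(t)[p_1,…,p_k] graded by total degree. Suppose G = m + R is an operator in the Weyl algebra over ℚ(t), where m is a nonzero monomial in p_1,…,p_k of total degree d, and every monomial p^α ∂^β occurring in R satisfies ∑_{i=1}^k (α_i − β_i) < d. Then for every nonzero polynomial s ∈ ℚ(t)[p_1,…,p_k], the leading monomial of G·s with respect to ≺ equals m times the leading monomial of s. -/

import Mathlib

open scoped Classical

noncomputable section

/-- Total degree of an exponent vector. -/
def wt {k : ℕ} (d : Fin k →₀ ℕ) : ℕ := d.sum fun _ e => e

/-- The multi-derivative `∂^β` acting on `ℚ(t)[p₁,…,p_k]`, by its closed formula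
`∂^β (c·p^γ) = c (∏ᵢ γᵢ(γᵢ−1)⋯(γᵢ−βᵢ+1)) p^{γ−β}`. -/
def derivMulti {k : ℕ} (β : Fin k →₀ ℕ) (s : MvPolynomial (Fin k) (RatFunc ℚ)) :
    MvPolynomial (Fin k) (RatFunc ℚ) :=
  (AddMonoidAlgebra.coeff s).sum fun γ c =>
    if β ≤ γ then
      MvPolynomial.monomial (γ - β)
        (c * ∏ i ∈ β.support, ((γ i).descFactorial (β i) : RatFunc ℚ))
    else 0

/-- The action of the Weyl-algebra operator `G = p^μ + R` on a polynomial `s`, where the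
rest `R` is recorded as a finitely supported family `c` of coefficients `c (α, β)` of the
monomials `p^α ∂^β`. -/
def applyOp {k : ℕ} (μ : Fin k →₀ ℕ)
    (c : ((Fin k →₀ ℕ) × (Fin k →₀ ℕ)) →₀ RatFunc ℚ)
    (s : MvPolynomial (Fin k) (RatFunc ℚ)) : MvPolynomial (Fin k) (RatFunc ℚ) :=
  MvPolynomial.monomial μ 1 * s +
    c.sum fun q a => a • (MvPolynomial.monomial q.1 1 * derivMulti q.2 s)

/-! The shift `p^μ` maps the monomials of `s` to their translates by `μ`, so, the order being
compatible with addition, `p^μ s` has leading monomial `μ + d₀`. A monomial of `R s` arises from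
`p^α ∂^β p^γ ∈ ℚ(t) p^{α + γ - β}` with `p^γ` in `s`; as the order is graded, `|γ| ≤ |d₀|`, so its
total degree is `|α| - |β| + |γ| < |μ| + |d₀|`, which puts it strictly below `μ + d₀`. Hence `R s`
can neither cancel nor exceed the leading term of `p^μ s`. -/

open MvPolynomial

def restOp {k : ℕ} (c : ((Fin k →₀ ℕ) × (Fin k →₀ ℕ)) →₀ RatFunc ℚ)
    (s : MvPolynomial (Fin k) (RatFunc ℚ)) : MvPolynomial (Fin k) (RatFunc ℚ) :=
  c.sum fun q a => a • (monomial q.1 1 * derivMulti q.2 s)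

lemma applyOp_eq_add_restOp {k : ℕ} (μ : Fin k →₀ ℕ)
    (c : ((Fin k →₀ ℕ) × (Fin k →₀ ℕ)) →₀ RatFunc ℚ) (s : MvPolynomial (Fin k) (RatFunc ℚ)) :
    applyOp μ c s = monomial μ 1 * s + restOp c s := rfl

lemma wt_eq_degree {k : ℕ} (d : Fin k →₀ ℕ) : wt d = d.degree := rfl

lemma wt_add {k : ℕ} (a b : Fin k →₀ ℕ) : wt (a + b) = wt a + wt b := by
  simp only [wt_eq_degree, map_add]

lemma wt_tsub_add {k : ℕ} {a b : Fin k →₀ ℕ} (h : a ≤ b) : wt (b - a) + wt a = wt b := by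
  rw [← wt_add, tsub_add_cancel_of_le h]

section LeadingMonomial

variable {σ R : Type*} [CommSemiring R]

lemma mem_support_monomial_one_mul {α e : σ →₀ ℕ} {p : MvPolynomial σ R}
    (he : e ∈ (monomial α 1 * p).support) : α ≤ e ∧ e - α ∈ p.support := by
  rw [mem_support_iff, coeff_monomial_mul'] at he
  split_ifs at he with hα
  · exact ⟨hα, mem_support_iff.2 (by rwa [one_mul] at he)⟩
  · exact absurd rfl he

lemma coeff_add_monomial_one_mul (α e : σ →₀ ℕ) (p : MvPolynomial σ R) :
    coeff (α + e) (monomial α 1 * p) = coeff e p := by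
  rw [coeff_monomial_mul', if_pos le_self_add, one_mul, add_tsub_cancel_left]

/- The monomial order is passed explicitly: as an instance it would be overridden by the
pointwise order on `σ →₀ ℕ`. -/
def IsLeadingMonomial (r : LinearOrder (σ →₀ ℕ)) (p : MvPolynomial σ R) (d : σ →₀ ℕ) : Prop :=
  d ∈ p.support ∧ ∀ e ∈ p.support, r.le e d

variable {r : LinearOrder (σ →₀ ℕ)} {p q : MvPolynomial σ R} {d : σ →₀ ℕ}

lemma IsLeadingMonomial.monomial_one_mul
    (hadd : ∀ a b e : σ →₀ ℕ, r.lt a b → r.lt (a + e) (b + e))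
    (hp : IsLeadingMonomial r p d) (α : σ →₀ ℕ) :
    IsLeadingMonomial r (monomial α 1 * p) (α + d) := by
  refine ⟨by rw [mem_support_iff, coeff_add_monomial_one_mul]; exact mem_support_iff.1 hp.1,
    fun e he => ?_⟩
  obtain ⟨hαe, hsupp⟩ := mem_support_monomial_one_mul he
  rw [← add_tsub_cancel_of_le hαe, add_comm α, add_comm α]
  rcases (@le_iff_lt_or_eq _ r.toPartialOrder _ _).1 (hp.2 _ hsupp) with hlt | heq
  · exact @le_of_lt _ r.toPreorder _ _ (hadd _ _ α hlt)
  · rw [heq]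
    exact @le_refl _ r.toPreorder _

lemma IsLeadingMonomial.add_of_lt (hp : IsLeadingMonomial r p d)
    (hq : ∀ e ∈ q.support, r.lt e d) : IsLeadingMonomial r (p + q) d := by
  have hdq : coeff d q = 0 :=
    notMem_support_iff.1 fun h => @lt_irrefl _ r.toPreorder d (hq d h)
  refine ⟨?_, fun e he => ?_⟩
  · simpa only [mem_support_iff, coeff_add, hdq, add_zero] using hp.1
  · rcases Finset.mem_union.1 (support_add he) with he | he
    exacts [hp.2 e he, @le_of_lt _ r.toPreorder _ _ (hq e he)]

lemma IsLeadingMonomial.wt_le {k : ℕ} {r : LinearOrder (Fin k →₀ ℕ)} {p : MvPolynomial (Fin k) R}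
    {d : Fin k →₀ ℕ} (hgrad : ∀ a b : Fin k →₀ ℕ, wt a < wt b → r.lt a b)
    (hp : IsLeadingMonomial r p d) : ∀ γ ∈ p.support, wt γ ≤ wt d := fun γ hγ =>
  not_lt.1 fun h => @not_le_of_gt _ r.toPreorder _ _ (hgrad _ _ h) (hp.2 γ hγ)

end LeadingMonomial

section WeylAction

variable {k : ℕ} {s : MvPolynomial (Fin k) (RatFunc ℚ)} {n : ℕ}

lemma exists_of_mem_support_derivMulti {β e : Fin k →₀ ℕ} (he : e ∈ (derivMulti β s).support) :
    ∃ γ ∈ s.support, β ≤ γ ∧ γ - β = e := by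
  rw [mem_support_iff, derivMulti, Finsupp.sum, coeff_sum] at he
  obtain ⟨γ, hγ, hne⟩ := Finset.exists_ne_zero_of_sum_ne_zero he
  split_ifs at hne with hβγ
  · rw [coeff_monomial] at hne
    exact ⟨γ, hγ, hβγ, of_not_not fun h => hne (if_neg h)⟩
  · exact absurd (coeff_zero e) hne

lemma wt_add_le_of_mem_support_derivMulti (hs : ∀ γ ∈ s.support, wt γ ≤ n)
    {β e : Fin k →₀ ℕ} (he : e ∈ (derivMulti β s).support) : wt e + wt β ≤ n := by
  obtain ⟨γ, hγ, hβγ, rfl⟩ := exists_of_mem_support_derivMulti he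
  rw [wt_tsub_add hβγ]
  exact hs γ hγ

lemma wt_lt_of_mem_support_restOp {c : ((Fin k →₀ ℕ) × (Fin k →₀ ℕ)) →₀ RatFunc ℚ} {m : ℕ}
    (hR : ∀ q ∈ c.support, (wt q.1 : ℤ) - wt q.2 < m) (hs : ∀ γ ∈ s.support, wt γ ≤ n)
    {e : Fin k →₀ ℕ} (he : e ∈ (restOp c s).support) : wt e < m + n := by
  obtain ⟨q, hq, he⟩ := Finset.mem_biUnion.1 (support_sum he)
  obtain ⟨hle, hmem⟩ := mem_support_monomial_one_mul (support_smul he)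
  have h₁ := wt_tsub_add hle
  have h₂ := wt_add_le_of_mem_support_derivMulti hs hmem
  have h₃ := hR q hq
  omega

end WeylAction

theorem leadingMonomial_applyOp_general (k : ℕ)
    (r : LinearOrder (Fin k →₀ ℕ))
    (hadd : ∀ a b e : Fin k →₀ ℕ, r.lt a b → r.lt (a + e) (b + e))
    (hgrad : ∀ a b : Fin k →₀ ℕ, wt a < wt b → r.lt a b)
    (μ : Fin k →₀ ℕ)
    (c : ((Fin k →₀ ℕ) × (Fin k →₀ ℕ)) →₀ RatFunc ℚ)
    (hR : ∀ q ∈ c.support, ((wt q.1 : ℤ) - (wt q.2 : ℤ)) < (wt μ : ℤ))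
    (s : MvPolynomial (Fin k) (RatFunc ℚ))
    (d₀ : Fin k →₀ ℕ) (hd₀ : d₀ ∈ s.support) (hmax : ∀ d ∈ s.support, r.le d d₀) :
    (μ + d₀) ∈ (applyOp μ c s).support ∧
      ∀ d ∈ (applyOp μ c s).support, r.le d (μ + d₀) := by
  have hs : IsLeadingMonomial r s d₀ := ⟨hd₀, hmax⟩
  rw [applyOp_eq_add_restOp]
  refine (hs.monomial_one_mul hadd μ).add_of_lt fun e he => hgrad _ _ ?_
  rw [wt_add]
  exact wt_lt_of_mem_support_restOp hR (hs.wt_le hgrad) he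

/-- Let `≺` be a monomial ordering on `ℚ(t)[p₁,…,p_k]` graded by total degree, and let
`G = p^μ + R` be a dominant operator: every monomial `p^α∂^β` of `R` satisfies
`∑ᵢ(αᵢ−βᵢ) < wt μ`.  Then for every nonzero `s`, the leading monomial of `G·s` is
`p^μ` times the leading monomial of `s`. -/
theorem leadingMonomial_applyOp (k : ℕ)
    (r : LinearOrder (Fin k →₀ ℕ))
    (hadd : ∀ a b e : Fin k →₀ ℕ, r.lt a b → r.lt (a + e) (b + e))
    (hgrad : ∀ a b : Fin k →₀ ℕ, wt a < wt b → r.lt a b)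
    (μ : Fin k →₀ ℕ)
    (c : ((Fin k →₀ ℕ) × (Fin k →₀ ℕ)) →₀ RatFunc ℚ)
    (hR : ∀ q ∈ c.support, ((wt q.1 : ℤ) - (wt q.2 : ℤ)) < (wt μ : ℤ))
    (s : MvPolynomial (Fin k) (RatFunc ℚ)) (hs : s ≠ 0)
    (d₀ : Fin k →₀ ℕ) (hd₀ : d₀ ∈ s.support) (hmax : ∀ d ∈ s.support, r.le d d₀) :
    (μ + d₀) ∈ (applyOp μ c s).support ∧
      ∀ d ∈ (applyOp μ c s).support, r.le d (μ + d₀) :=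
  leadingMonomial_applyOp_general k r hadd hgrad μ c hR s d₀ hd₀ hmax

end
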